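/- arXiv:1705.05213 — 2 statements merged into one kernel-verified Lean document; each statement's English description precedes it below -/
import Mathlib

section
/- Let q ≥ 1, n ≥ 1 and A ≥ 0 be integers, and define J_A := {(j_1,…,j_n) ∈ ℤ^n : 1 ≤ j_k ≤ q for all k, and for every k ∈ {1,…,n}, Σ_{s≠k} ⌈(j_k − j_s)/(q+1)⌉ − j_k ≥ A − (q−n)}. Then J_A equals the union, over all permutations σ of {1,…,n}, of the sets σ(B_{q−A}), where B_t := {(j_1,…,j_n) ∈ ℤ^n : 1 ≤ j_k ≤ t−k for all k} and σ(B_t) := {(j_{σ(1)},…,j_{σ(n)}) : (j_1,…,j_n) ∈ B_t}. -/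
/-!
For entries in `[1, q]` every ceiling `⌈(j_k - j_s)/(q+1)⌉` is `1` if `j_s < j_k` and `0`
otherwise, so the defining inequality of `J_A` at `k` says that `j_k` plus the number of
entries `≥ j_k` is at most `q - A`. Listing the entries in decreasing order, the `i`-th one
(counted from `1`) has at least `i` entries above or equal to it, which gives membership in a
permutation of `B_{q-A}`; conversely, in a permutation of `B_{q-A}`, the entries `≥ j_k` sit at
distinct positions `i` with `i ≤ q - A - j_k`.
-/

open Finset

lemma ceil_intCast_div_eq_ite {K : Type*} [Field K] [LinearOrder K] [IsStrictOrderedRing K]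
    [FloorRing K] {d m : ℤ} (hlt : -m < d) (hle : d ≤ m) :
    ⌈(d : K) / m⌉ = if 0 < d then 1 else 0 := by
  have hm : (0 : K) < m := by exact_mod_cast (by omega : 0 < m)
  rw [Int.ceil_eq_iff]
  split_ifs with hd
  · push_cast
    refine ⟨by simpa using div_pos (by exact_mod_cast hd) hm, ?_⟩
    rw [div_le_one hm]
    exact_mod_cast hle
  · push_cast
    refine ⟨?_, div_nonpos_of_nonpos_of_nonneg (by exact_mod_cast not_lt.1 hd) hm.le⟩
    rw [lt_div_iff₀ hm]
    exact_mod_cast (by omega : -1 * m < d)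

lemma sum_ceil_sub_div_eq_card_sub {ι : Type*} [Fintype ι] [DecidableEq ι] (q : ℤ) (j : ι → ℤ)
    (hj : ∀ k, 1 ≤ j k ∧ j k ≤ q) (k : ι) :
    ∑ s ∈ univ.erase k, ⌈((j k : ℚ) - (j s : ℚ)) / ((q : ℚ) + 1)⌉
      = Fintype.card ι - #{s | j k ≤ j s} := by
  calc ∑ s ∈ univ.erase k, ⌈((j k : ℚ) - (j s : ℚ)) / ((q : ℚ) + 1)⌉
      = ∑ s ∈ univ.erase k, if j s < j k then 1 else 0 := by
        refine sum_congr rfl fun s _ => ?_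
        have := ceil_intCast_div_eq_ite (K := ℚ) (d := j k - j s) (m := q + 1)
          (by linarith [hj k, hj s]) (by linarith [hj k, hj s])
        push_cast at this
        simpa only [sub_pos] using this
    _ = #{s | j s < j k} := by
        rw [sum_boole, filter_erase, erase_eq_of_notMem (by simp)]
    _ = Fintype.card ι - #{s | j k ≤ j s} := by
        have := card_filter_add_card_filter_not (s := univ) fun s => j s < j k
        simp only [not_lt, card_univ] at this
        omega

lemma exists_perm_add_le_iff {n : ℕ} (t : ℤ) (f : Fin n → ℤ) :
    (∃ σ : Equiv.Perm (Fin n), ∀ i, f (σ i) + (i + 1) ≤ t) ↔ ∀ k, f k + #{s | f k ≤ f s} ≤ t := by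
  constructor
  · rintro ⟨σ, hσ⟩ k
    have hk := hσ (σ.symm k)
    rw [σ.apply_symm_apply] at hk
    have hcard : #{s | f k ≤ f s} ≤ (range (t - f k).toNat).card := by
      refine card_le_card_of_injOn (fun s => (σ.symm s : ℕ)) (fun s hs => ?_)
        (fun a _ b _ hab => σ.symm.injective (Fin.val_injective hab))
      simp only [coe_filter, mem_univ, true_and, Set.mem_ofPred_eq] at hs
      have := hσ (σ.symm s)
      rw [σ.apply_symm_apply] at this
      simp only [coe_range, Set.mem_Iio]
      omega
    rw [card_range] at hcard
    omega
  · intro h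
    refine ⟨Tuple.sort (fun k => -f k), fun i => ?_⟩
    set σ := Tuple.sort (fun k => -f k)
    have hcard : (Iic i).card ≤ #{s | f (σ i) ≤ f s} := by
      refine card_le_card_of_injOn σ (fun l hl => ?_) σ.injective.injOn
      simp only [coe_Iic, Set.mem_Iic] at hl
      simpa using Tuple.monotone_sort (fun k => -f k) hl
    rw [Fin.card_Iic] at hcard
    linarith [h (σ i)]

lemma mem_iUnion_image_comp_perm {ι β : Type*} (S : Set (ι → β)) (j : ι → β) :
    j ∈ ⋃ σ : Equiv.Perm ι, (fun w => w ∘ σ) '' S ↔ ∃ σ : Equiv.Perm ι, j ∘ σ ∈ S := by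
  simp only [Set.mem_iUnion, Set.mem_image]
  constructor
  · rintro ⟨σ, w, hw, rfl⟩
    exact ⟨σ⁻¹, by simpa [Function.comp_assoc] using hw⟩
  · rintro ⟨σ, hσ⟩
    exact ⟨σ⁻¹, j ∘ σ, hσ, by ext; simp⟩

theorem stmt_7_general (q A : ℤ) (hA : 0 ≤ A) (n : ℕ) :
    {j : Fin n → ℤ | (∀ k, 1 ≤ j k ∧ j k ≤ q) ∧ ∀ k : Fin n,
        (∑ s ∈ Finset.univ.erase k, ⌈((j k : ℚ) - (j s : ℚ)) / ((q : ℚ) + 1)⌉) - j k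
          ≥ A - (q - (n : ℤ))}
      = ⋃ σ : Equiv.Perm (Fin n), (fun j => j ∘ σ) ''
          {j : Fin n → ℤ | ∀ k : Fin n, 1 ≤ j k ∧ j k ≤ (q - A) - ((k.val : ℤ) + 1)} := by
  ext j
  rw [mem_iUnion_image_comp_perm]
  simp only [Set.mem_ofPred_eq, Function.comp_apply]
  have hsum := sum_ceil_sub_div_eq_card_sub q j
  simp only [Fintype.card_fin] at hsum
  constructor
  · rintro ⟨hbd, hJ⟩
    obtain ⟨σ, hσ⟩ := (exists_perm_add_le_iff (q - A) j).2 fun k => by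
      linarith [hJ k, hsum hbd k]
    exact ⟨σ, fun i => ⟨(hbd (σ i)).1, by linarith [hσ i]⟩⟩
  · rintro ⟨σ, hσ⟩
    have hbd : ∀ k, 1 ≤ j k ∧ j k ≤ q := fun k => by
      obtain ⟨i, rfl⟩ := σ.surjective k
      exact ⟨(hσ i).1, by linarith [(hσ i).2, (i : ℕ).cast_nonneg (α := ℤ)]⟩
    have hcount := (exists_perm_add_le_iff (q - A) j).1 ⟨σ, fun i => by linarith [hσ i]⟩
    exact ⟨hbd, fun k => by linarith [hcount k, hsum hbd k]⟩

/-- For integers `q ≥ 1`, `n ≥ 1`, `A ≥ 0`, the set `J_A` equals the union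
over all permutations `σ` of `σ(B_{q-A})`, where
`B_t = {j ∈ ℤ^n | 1 ≤ j_k ≤ t-k for all k}`. -/
theorem stmt_7 (q A : ℤ) (hq : 1 ≤ q) (hA : 0 ≤ A) (n : ℕ) (hn : 1 ≤ n) :
    {j : Fin n → ℤ | (∀ k, 1 ≤ j k ∧ j k ≤ q) ∧ ∀ k : Fin n,
        (∑ s ∈ Finset.univ.erase k, ⌈((j k : ℚ) - (j s : ℚ)) / ((q : ℚ) + 1)⌉) - j k
          ≥ A - (q - (n : ℤ))}
      = ⋃ σ : Equiv.Perm (Fin n), (fun j => j ∘ σ) ''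
          {j : Fin n → ℤ | ∀ k : Fin n, 1 ≤ j k ∧ j k ≤ (q - A) - ((k.val : ℤ) + 1)} :=
  stmt_7_general q A hA n
end

section
/- Let q be a prime power, m ≥ 2 a divisor of q+1, N := (q+1)/m, and suppose q−2−N ≥ 0. Let G₀ denote the number of pairs (t_1,t_2) of positive integers such that, for k = 1 and k = 2, m·⌈(t_k − t_s)/m⌉ + m·(q−2)·⌈t_k/m⌉ > q·t_k (where s is the other index). Then (m−1)(q−1)(2qm−m−q−1)/6 − G₀ = (m−1)·((3m−1)q² − (6m+N+5)q + 3m−N−4)/12 + q(m−1). -/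
open Finset

/- Count of pairs (a,b) in [0,A)² with a+b < L. -/
private lemma cnt_pairs (A L : ℕ) (h : L ≤ A) :
    2 * (∑ a ∈ range A, ∑ b ∈ range A, if a + b < L then 1 else 0) = L * (L + 1) := by
  have h1 : ∀ a, (∑ b ∈ range A, if a + b < L then 1 else 0) = L - a := by
    intro a
    have e1 : (∑ b ∈ range A, if a + b < L then 1 else 0)
        = ((range A).filter (fun b => b < L - a)).card := by
      rw [Finset.card_filter]
      exact Finset.sum_congr rfl (fun b _ => by congr 1; simp only [eq_iff_iff]; omega)
    have e2 : (range A).filter (fun b => b < L - a) = range (L - a) := by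
      ext x; simp; omega
    rw [e1, e2, Finset.card_range]
  simp only [h1]
  have e3 : (∑ a ∈ range A, (L - a)) = ∑ a ∈ range L, (L - a) := by
    refine (Finset.sum_subset (Finset.range_subset_range.2 h) ?_).symm
    intro x _ hx
    simp at hx; omega
  rw [e3, ← Finset.sum_range_reflect (fun a => L - a) L]
  have e4 : (∑ j ∈ range L, (L - (L - 1 - j))) = ∑ j ∈ range L, (j + 1) := by
    refine Finset.sum_congr rfl (fun j hj => ?_)
    simp at hj; omega
  rw [e4, Finset.sum_add_distrib]
  simp only [Finset.sum_const, Finset.card_range, smul_eq_mul, mul_one]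
  cases L with
  | zero => simp
  | succ n =>
    rw [mul_add, mul_comm 2 (∑ j ∈ range (n+1), j), Finset.sum_range_id_mul_two]
    simp [Nat.succ_sub_one]; ring

/-- Integer ceiling of (m*a - r)/m. -/
private lemma ceil_div_eq (m a r : ℤ) (hm : 0 < m) (h0 : 0 ≤ r) (h1 : r < m) :
    ⌈((m * a - r : ℤ) : ℚ) / (m : ℚ)⌉ = a := by
  rw [Int.ceil_eq_iff]
  have hm' : (0:ℚ) < (m:ℚ) := by exact_mod_cast hm
  have h0' : (0:ℚ) ≤ (r:ℚ) := by exact_mod_cast h0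
  have h1' : (r:ℚ) < (m:ℚ) := by exact_mod_cast h1
  constructor
  · rw [lt_div_iff₀ hm']
    push_cast
    nlinarith [h1', hm']
  · rw [div_le_iff₀ hm']
    push_cast
    nlinarith [h0', hm']

private lemma bridge (m q : ℕ) (a b r1 r2 : ℤ) (hm : 0 < (m:ℤ))
    (h1 : 0 ≤ r1) (h2 : r1 < (m:ℤ)) (h3 : 0 ≤ r2) (h4 : r2 < (m:ℤ)) :
    ((m:ℤ) * ⌈((((m:ℤ) * a - r1 : ℤ) : ℚ) - (((m:ℤ) * b - r2 : ℤ) : ℚ)) / ((m:ℕ) : ℚ)⌉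
      + (m:ℤ) * ((q:ℤ) - 2) * ⌈(((m:ℤ) * a - r1 : ℤ) : ℚ) / ((m:ℕ) : ℚ)⌉
        > (q:ℤ) * ((m:ℤ) * a - r1))
    ↔ (m:ℤ) * (a + b) < (q:ℤ) * r1 + (if r1 < r2 then (m:ℤ) else 0) := by
  have hmm : ((m:ℕ) : ℚ) = (((m:ℤ) : ℤ) : ℚ) := by push_cast; ring
  rw [hmm]
  have hceil1 : ⌈(((m:ℤ) * a - r1 : ℤ) : ℚ) / (((m:ℤ) : ℤ) : ℚ)⌉ = a :=
    ceil_div_eq (m:ℤ) a r1 hm h1 h2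
  have hceil2 : ⌈((((m:ℤ) * a - r1 : ℤ) : ℚ) - (((m:ℤ) * b - r2 : ℤ) : ℚ)) / (((m:ℤ) : ℤ) : ℚ)⌉
      = a - b + (if r1 < r2 then 1 else 0) := by
    have e : (((m:ℤ) * a - r1 : ℤ) : ℚ) - (((m:ℤ) * b - r2 : ℤ) : ℚ)
        = (((m:ℤ) * (a - b + (if r1 < r2 then 1 else 0))
            - ((if r1 < r2 then (m:ℤ) else 0) + r1 - r2) : ℤ) : ℚ) := by
      push_cast
      split_ifs <;> ring
    rw [e, ceil_div_eq]
    · exact hm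
    · split_ifs with h <;> omega
    · split_ifs with h <;> omega
  rw [hceil1, hceil2]
  split_ifs with h
  · constructor <;> intro hh <;> nlinarith [hh]
  · constructor <;> intro hh <;> nlinarith [hh]

private lemma A1Z (m q N r s : ℤ) (hm : 0 < m) (hr0 : 0 ≤ r) (hr : r < m)
    (hq : q + 1 = m * N) : m * s < q * r ↔ s < N * r := by
  have key : q * r + r = m * (N * r) := by
    have : (q + 1) * r = m * N * r := by rw [hq]
    nlinarith [this]
  constructor
  · intro h
    by_contra hc
    push_neg at hc
    have : m * (N * r) ≤ m * s := by
      exact mul_le_mul_of_nonneg_left hc hm.le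
    linarith
  · intro h
    have h1 : s + 1 ≤ N * r := by omega
    have : m * (s + 1) ≤ m * (N * r) := mul_le_mul_of_nonneg_left h1 hm.le
    nlinarith

private lemma A2Z (m q N r r2 s : ℤ) (hm : 0 < m) (hN : 1 ≤ N) (h0 : 0 ≤ r)
    (hrr : r < r2) (hr2 : r2 < m) (hs : 2 ≤ s) (hq : q + 1 = m * N) :
    (m * s < q * r + m ∧ m * s < q * r2) ↔ s < N * r + 1 := by
  have key : q * r + r = m * (N * r) := by
    have : (q + 1) * r = m * N * r := by rw [hq]
    nlinarith [this]
  constructor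
  · rintro ⟨hc1, _⟩
    by_contra hc
    push_neg at hc
    have h1 : N * r + 1 ≤ s := by omega
    have : m * (N * r + 1) ≤ m * s := mul_le_mul_of_nonneg_left h1 hm.le
    nlinarith
  · intro h
    have hsr : s ≤ N * r := by omega
    have hrpos : 1 ≤ r := by
      by_contra hc
      push_neg at hc
      have : r = 0 := by omega
      rw [this] at hsr
      simp at hsr
      omega
    constructor
    · have : m * s ≤ m * (N * r) := mul_le_mul_of_nonneg_left hsr hm.le
      nlinarith
    · rw [A1Z m q N r2 s hm (by omega) hr2 hq]
      have : N * r + N ≤ N * r2 := by nlinarith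
      omega

/- ℕ-valued bound L. -/
private def Lb (N r1 r2 : ℕ) : ℕ :=
  if r1 = r2 then N * r1 - 2 else N * (min r1 r2) - 1

/- ℤ-valued cell term. -/
private def termZ (N r1 r2 : ℕ) : ℤ :=
  if r1 = r2 then (if r1 = 0 then 0 else ((N : ℤ) * r1 - 1) * ((N : ℤ) * r1 - 2))
  else ((N : ℤ) * (min r1 r2 : ℕ)) * ((N : ℤ) * (min r1 r2 : ℕ) - 1)

private lemma h_diag (k : ℕ) (hk : 1 ≤ k) :
    (((k - 2) * ((k - 2) + 1) : ℕ) : ℤ) = ((k : ℤ) - 1) * ((k : ℤ) - 2) := by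
  rcases k with _ | _ | j
  · omega
  · norm_num
  · have e : (j + 2) - 2 = j := by omega
    rw [e]
    push_cast
    ring

private lemma h_off (k : ℕ) :
    (((k - 1) * ((k - 1) + 1) : ℕ) : ℤ) = (k : ℤ) * ((k : ℤ) - 1) := by
  rcases k with _ | j
  · norm_num
  · have e : (j + 1) - 1 = j := by omega
    rw [e]
    push_cast
    ring

private lemma cellcast (N r1 r2 : ℕ) (hN : 1 ≤ N) :
    ((Lb N r1 r2 * (Lb N r1 r2 + 1) : ℕ) : ℤ) = termZ N r1 r2 := by
  unfold Lb termZ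
  split_ifs with h1 h2
  · subst h1; subst h2; simp
  · have hk : 1 ≤ N * r1 := Nat.one_le_iff_ne_zero.2 (by positivity)
    rw [h_diag (N * r1) hk]
    push_cast
    ring
  · rw [h_off (N * (min r1 r2))]
    push_cast
    ring

/- The cell condition equivalence. -/
private lemma cell_iff (m q N r1 r2 a b : ℕ) (hm : 0 < m) (hN : 1 ≤ N)
    (hr1 : r1 < m) (hr2 : r2 < m) (hq : q + 1 = m * N) :
    (((m : ℤ) * ((a : ℤ) + (b : ℤ) + 2) < (q : ℤ) * r1 + (if r1 < r2 then (m : ℤ) else 0))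
      ∧ ((m : ℤ) * ((a : ℤ) + (b : ℤ) + 2) < (q : ℤ) * r2 + (if r2 < r1 then (m : ℤ) else 0)))
    ↔ a + b < Lb N r1 r2 := by
  have hmZ : (0 : ℤ) < (m : ℤ) := by exact_mod_cast hm
  have hNZ : (1 : ℤ) ≤ (N : ℤ) := by exact_mod_cast hN
  have hqZ : (q : ℤ) + 1 = (m : ℤ) * (N : ℤ) := by exact_mod_cast hq
  unfold Lb
  rcases lt_trichotomy r1 r2 with h | h | h
  · rw [if_pos h, if_neg (by omega : ¬ r2 < r1), if_neg (by omega : ¬ r1 = r2), add_zero]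
    rw [A2Z (m:ℤ) (q:ℤ) (N:ℤ) (r1:ℤ) (r2:ℤ) ((a:ℤ)+(b:ℤ)+2) hmZ hNZ (by positivity)
      (by exact_mod_cast h) (by exact_mod_cast hr2) (by omega) hqZ]
    have emin : min r1 r2 = r1 := min_eq_left h.le
    rw [emin]
    have hc : ((N * r1 : ℕ) : ℤ) = (N : ℤ) * (r1 : ℤ) := by push_cast; ring
    omega
  · rw [if_neg (by omega : ¬ r1 < r2), if_neg (by omega : ¬ r2 < r1),
      if_pos h, add_zero, add_zero, ← h]
    have hiff := A1Z (m:ℤ) (q:ℤ) (N:ℤ) (r1:ℤ) ((a:ℤ)+(b:ℤ)+2) hmZ (by positivity)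
      (by exact_mod_cast hr1) hqZ
    rw [and_self, hiff]
    have hc : ((N * r1 : ℕ) : ℤ) = (N : ℤ) * (r1 : ℤ) := by push_cast; ring
    omega
  · rw [if_neg (by omega : ¬ r1 < r2), if_pos h, if_neg (by omega : ¬ r1 = r2), add_zero]
    rw [and_comm]
    rw [A2Z (m:ℤ) (q:ℤ) (N:ℤ) (r2:ℤ) (r1:ℤ) ((a:ℤ)+(b:ℤ)+2) hmZ hNZ (by positivity)
      (by exact_mod_cast h) (by exact_mod_cast hr1) (by omega) hqZ]
    have emin : min r1 r2 = r2 := min_eq_right h.le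
    rw [emin]
    have hc : ((N * r2 : ℕ) : ℤ) = (N : ℤ) * (r2 : ℤ) := by push_cast; ring
    omega

private lemma qsum (N m : ℕ) :
    6 * ∑ r ∈ range m, ((N:ℤ) * r) * ((N:ℤ) * r - 1)
      = (N:ℤ)^2 * ((m:ℤ) - 1) * (m:ℤ) * (2 * (m:ℤ) - 1) - 3 * (N:ℤ) * (m:ℤ) * ((m:ℤ) - 1) := by
  induction m with
  | zero => simp
  | succ n ih =>
    rw [Finset.sum_range_succ, mul_add, ih]
    push_cast
    ring

private lemma ssum (N m : ℕ) (hN : 1 ≤ N) (hm : 1 ≤ m) :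
    6 * ∑ r1 ∈ range m, ∑ r2 ∈ range m, termZ N r1 r2
      = ((m:ℤ) - 1) * (((m:ℤ) - 1) * ((m:ℤ) * (N:ℤ) - 1)^2
          + ((N:ℤ) - 7) * ((m:ℤ) * (N:ℤ) - 1) + (N:ℤ) - (m:ℤ) + 6) := by
  induction m, hm using Nat.le_induction with
  | base => simp [termZ]
  | succ n hn ih =>
    rw [Finset.sum_range_succ]
    have e1 : ∑ r1 ∈ range n, ∑ r2 ∈ range (n+1), termZ N r1 r2
        = (∑ r1 ∈ range n, ∑ r2 ∈ range n, termZ N r1 r2)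
          + ∑ r1 ∈ range n, termZ N r1 n := by
      rw [← Finset.sum_add_distrib]
      exact Finset.sum_congr rfl (fun r1 _ => Finset.sum_range_succ _ _)
    have e2 : ∑ r2 ∈ range (n+1), termZ N n r2
        = (∑ r2 ∈ range n, termZ N n r2) + termZ N n n := Finset.sum_range_succ _ _
    have e3 : ∀ r ∈ range n, termZ N r n = ((N:ℤ) * r) * ((N:ℤ) * r - 1) := by
      intro r hr
      simp only [mem_range] at hr
      unfold termZ
      rw [if_neg (by omega), min_eq_left hr.le]
    have e4 : ∀ r ∈ range n, termZ N n r = ((N:ℤ) * r) * ((N:ℤ) * r - 1) := by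
      intro r hr
      simp only [mem_range] at hr
      unfold termZ
      rw [if_neg (by omega), min_eq_right hr.le]
    have e5 : termZ N n n = ((N:ℤ) * n - 1) * ((N:ℤ) * n - 2) := by
      unfold termZ
      rw [if_pos rfl, if_neg (by omega)]
    rw [e1, e2, Finset.sum_congr rfl e3, Finset.sum_congr rfl e4, e5]
    have hq := qsum N n
    push_cast
    push_cast at ih hq
    linear_combination ih + 2 * hq

set_option maxHeartbeats 4000000 in
theorem stmt_18 (q m N : ℕ) (hq : IsPrimePow q) (hm : 2 ≤ m) (hdvd : m ∣ q + 1)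
    (hN : q + 1 = m * N) (hqN : 0 ≤ (q : ℤ) - 2 - (N : ℤ)) :
    2 * (((m : ℤ) - 1) * ((q : ℤ) - 1) * (2 * (q : ℤ) * (m : ℤ) - (m : ℤ) - (q : ℤ) - 1))
      - 12 * (({p : ℤ × ℤ | 1 ≤ p.1 ∧ 1 ≤ p.2 ∧
          ((m : ℤ) * ⌈((p.1 : ℚ) - (p.2 : ℚ)) / (m : ℚ)⌉
            + (m : ℤ) * ((q : ℤ) - 2) * ⌈(p.1 : ℚ) / (m : ℚ)⌉ > (q : ℤ) * p.1) ∧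
          ((m : ℤ) * ⌈((p.2 : ℚ) - (p.1 : ℚ)) / (m : ℚ)⌉
            + (m : ℤ) * ((q : ℤ) - 2) * ⌈(p.2 : ℚ) / (m : ℚ)⌉ > (q : ℤ) * p.2)}).ncard : ℤ)
      = ((m : ℤ) - 1) * ((3 * (m : ℤ) - 1) * (q : ℤ) ^ 2
          - (6 * (m : ℤ) + (N : ℤ) + 5) * (q : ℤ) + 3 * (m : ℤ) - (N : ℤ) - 4)
        + 12 * ((q : ℤ) * ((m : ℤ) - 1)) := by
  have hq2 : 2 ≤ q := hq.two_le
  have hm0 : 0 < m := by omega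
  have hN1 : 1 ≤ N := by
    rcases Nat.eq_zero_or_pos N with h | h
    · rw [h, mul_zero] at hN; omega
    · exact h
  have hmZ : (0 : ℤ) < (m : ℤ) := by exact_mod_cast hm0
  classical
  -- the condition on quadruples
  set Cnd : (ℕ × ℕ) × (ℕ × ℕ) → Prop := fun x =>
    ((m : ℤ) * ((x.2.1 : ℤ) + (x.2.2 : ℤ) + 2)
        < (q : ℤ) * x.1.1 + (if x.1.1 < x.1.2 then (m : ℤ) else 0))
    ∧ ((m : ℤ) * ((x.2.1 : ℤ) + (x.2.2 : ℤ) + 2)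
        < (q : ℤ) * x.1.2 + (if x.1.2 < x.1.1 then (m : ℤ) else 0)) with hCnd
  set D : Finset ((ℕ × ℕ) × (ℕ × ℕ)) :=
    ((range m ×ˢ range m) ×ˢ (range (q+1) ×ˢ range (q+1))).filter Cnd with hD
  set f : (ℕ × ℕ) × (ℕ × ℕ) → ℤ × ℤ := fun x =>
    ((m : ℤ) * ((x.2.1 : ℤ) + 1) - (x.1.1 : ℤ), (m : ℤ) * ((x.2.2 : ℤ) + 1) - (x.1.2 : ℤ))
    with hf
  -- the set equals the image
  have hset : {p : ℤ × ℤ | 1 ≤ p.1 ∧ 1 ≤ p.2 ∧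
          ((m : ℤ) * ⌈((p.1 : ℚ) - (p.2 : ℚ)) / (m : ℚ)⌉
            + (m : ℤ) * ((q : ℤ) - 2) * ⌈(p.1 : ℚ) / (m : ℚ)⌉ > (q : ℤ) * p.1) ∧
          ((m : ℤ) * ⌈((p.2 : ℚ) - (p.1 : ℚ)) / (m : ℚ)⌉
            + (m : ℤ) * ((q : ℤ) - 2) * ⌈(p.2 : ℚ) / (m : ℚ)⌉ > (q : ℤ) * p.2)}
        = ↑(D.image f) := by
    ext ⟨t1, t2⟩
    simp only [Set.mem_setOf_eq, coe_image, Set.mem_image, mem_coe, hD, Finset.mem_filter,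
      mem_product, mem_range]
    constructor
    · rintro ⟨ht1, ht2, hc1, hc2⟩
      set aZ : ℤ := ⌈(t1 : ℚ) / (m : ℚ)⌉ with haZ
      set bZ : ℤ := ⌈(t2 : ℚ) / (m : ℚ)⌉ with hbZ
      have hmQ : (0:ℚ) < (m:ℚ) := by exact_mod_cast hm0
      have ha1 : (1:ℤ) ≤ aZ := by
        rw [haZ]
        have : (0:ℚ) < (t1 : ℚ) / (m : ℚ) := div_pos (by exact_mod_cast ht1) hmQ
        have := Int.ceil_pos.2 this
        omega
      have hb1 : (1:ℤ) ≤ bZ := by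
        rw [hbZ]
        have : (0:ℚ) < (t2 : ℚ) / (m : ℚ) := div_pos (by exact_mod_cast ht2) hmQ
        have := Int.ceil_pos.2 this
        omega
      set r1Z : ℤ := (m : ℤ) * aZ - t1 with hr1Z
      set r2Z : ℤ := (m : ℤ) * bZ - t2 with hr2Z
      have hr1b : 0 ≤ r1Z ∧ r1Z < m := by
        constructor
        · have h := Int.le_ceil ((t1 : ℚ) / (m : ℚ))
          rw [← haZ] at h
          rw [div_le_iff₀ hmQ] at h
          have : (t1 : ℚ) ≤ (aZ : ℚ) * (m : ℚ) := h
          have : (t1 : ℤ) ≤ aZ * m := by exact_mod_cast this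
          rw [hr1Z]; linarith [this]
        · have h := Int.ceil_lt_add_one ((t1 : ℚ) / (m : ℚ))
          rw [← haZ] at h
          rw [show ((t1:ℚ)/(m:ℚ) + 1) = ((t1:ℚ) + (m:ℚ))/(m:ℚ) by field_simp] at h
          rw [lt_div_iff₀ hmQ] at h
          have : (aZ : ℚ) * (m : ℚ) < (t1 : ℚ) + (m : ℚ) := h
          have : aZ * m < t1 + m := by exact_mod_cast this
          rw [hr1Z]; linarith
      have hr2b : 0 ≤ r2Z ∧ r2Z < m := by
        constructor
        · have h := Int.le_ceil ((t2 : ℚ) / (m : ℚ))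
          rw [← hbZ] at h
          rw [div_le_iff₀ hmQ] at h
          have : (t2 : ℤ) ≤ bZ * m := by exact_mod_cast h
          rw [hr2Z]; linarith
        · have h := Int.ceil_lt_add_one ((t2 : ℚ) / (m : ℚ))
          rw [← hbZ] at h
          rw [show ((t2:ℚ)/(m:ℚ) + 1) = ((t2:ℚ) + (m:ℚ))/(m:ℚ) by field_simp] at h
          rw [lt_div_iff₀ hmQ] at h
          have : bZ * m < t2 + m := by exact_mod_cast h
          rw [hr2Z]; linarith
      have et1 : t1 = (m : ℤ) * aZ - r1Z := by rw [hr1Z]; ring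
      have et2 : t2 = (m : ℤ) * bZ - r2Z := by rw [hr2Z]; ring
      have hI1 : (m : ℤ) * (aZ + bZ) < (q : ℤ) * r1Z + (if r1Z < r2Z then (m : ℤ) else 0) := by
        rw [← bridge m q aZ bZ r1Z r2Z hmZ hr1b.1 hr1b.2 hr2b.1 hr2b.2]
        rw [← et1, ← et2]
        exact hc1
      have hI2 : (m : ℤ) * (bZ + aZ) < (q : ℤ) * r2Z + (if r2Z < r1Z then (m : ℤ) else 0) := by
        rw [← bridge m q bZ aZ r2Z r1Z hmZ hr2b.1 hr2b.2 hr1b.1 hr1b.2]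
        rw [← et1, ← et2]
        exact hc2
      -- bounds on aZ, bZ
      have haq : aZ ≤ (q : ℤ) := by
        have h1 : (q : ℤ) * r1Z + (if r1Z < r2Z then (m : ℤ) else 0)
            ≤ (q : ℤ) * ((m:ℤ) - 1) + m := by
          have : (q:ℤ) * r1Z ≤ (q:ℤ) * ((m:ℤ) - 1) :=
            mul_le_mul_of_nonneg_left (by omega) (by positivity)
          split_ifs <;> linarith
        have h2 : (m : ℤ) * (aZ + 1) ≤ (m : ℤ) * (aZ + bZ) :=
          mul_le_mul_of_nonneg_left (by omega) hmZ.le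
        have hq0 : (2 : ℤ) ≤ (q : ℤ) := by exact_mod_cast hq2
        nlinarith
      have hbq : bZ ≤ (q : ℤ) := by
        have h1 : (q : ℤ) * r2Z + (if r2Z < r1Z then (m : ℤ) else 0)
            ≤ (q : ℤ) * ((m:ℤ) - 1) + m := by
          have : (q:ℤ) * r2Z ≤ (q:ℤ) * ((m:ℤ) - 1) :=
            mul_le_mul_of_nonneg_left (by omega) (by positivity)
          split_ifs <;> linarith
        have h2 : (m : ℤ) * (bZ + 1) ≤ (m : ℤ) * (bZ + aZ) :=
          mul_le_mul_of_nonneg_left (by omega) hmZ.le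
        have hq0 : (2 : ℤ) ≤ (q : ℤ) := by exact_mod_cast hq2
        nlinarith
      refine ⟨((r1Z.toNat, r2Z.toNat), ((aZ - 1).toNat, (bZ - 1).toNat)), ⟨⟨⟨?_, ?_⟩, ?_, ?_⟩, ?_⟩, ?_⟩
      · show r1Z.toNat < m; omega
      · show r2Z.toNat < m; omega
      · show (aZ - 1).toNat < q + 1; omega
      · show (bZ - 1).toNat < q + 1; omega
      · -- Cnd
        simp only [hCnd]
        have ea : (((aZ - 1).toNat : ℕ) : ℤ) = aZ - 1 := by omega
        have eb : (((bZ - 1).toNat : ℕ) : ℤ) = bZ - 1 := by omega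
        have er1 : ((r1Z.toNat : ℕ) : ℤ) = r1Z := by omega
        have er2 : ((r2Z.toNat : ℕ) : ℤ) = r2Z := by omega
        have eif1 : (if r1Z.toNat < r2Z.toNat then (m:ℤ) else 0)
            = (if r1Z < r2Z then (m:ℤ) else 0) := by
          congr 1
          simp only [eq_iff_iff]
          omega
        have eif2 : (if r2Z.toNat < r1Z.toNat then (m:ℤ) else 0)
            = (if r2Z < r1Z then (m:ℤ) else 0) := by
          congr 1
          simp only [eq_iff_iff]
          omega
        constructor
        · simp only [ea, eb, er1, er2, eif1]
          have : aZ - 1 + (bZ - 1) + 2 = aZ + bZ := by ring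
          rw [this]
          exact hI1
        · simp only [ea, eb, er1, er2, eif2]
          have : aZ - 1 + (bZ - 1) + 2 = bZ + aZ := by ring
          rw [this]
          exact hI2
      · -- f x = (t1, t2)
        simp only [hf]
        simp only [Prod.mk.injEq]
        constructor
        · have : (((aZ - 1).toNat : ℕ) : ℤ) = aZ - 1 := by omega
          rw [this]
          have : ((r1Z.toNat : ℕ) : ℤ) = r1Z := by omega
          rw [this, et1]; ring
        · have : (((bZ - 1).toNat : ℕ) : ℤ) = bZ - 1 := by omega
          rw [this]
          have : ((r2Z.toNat : ℕ) : ℤ) = r2Z := by omega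
          rw [this, et2]; ring
    · rintro ⟨⟨⟨r1, r2⟩, ⟨a, b⟩⟩, ⟨⟨⟨hr1, hr2⟩, ha, hb⟩, hcnd⟩, hfx⟩
      simp only [hCnd] at hcnd
      simp only [hf] at hfx
      simp only [Prod.mk.injEq] at hfx
      obtain ⟨hfx1, hfx2⟩ := hfx
      have hr1Z : ((r1:ℤ)) < (m:ℤ) := by exact_mod_cast hr1
      have hr2Z : ((r2:ℤ)) < (m:ℤ) := by exact_mod_cast hr2
      have ht1 : (1:ℤ) ≤ t1 := by
        rw [← hfx1]
        nlinarith [hmZ, hr1Z, (by positivity : (0:ℤ) ≤ (a:ℤ))]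
      have ht2 : (1:ℤ) ≤ t2 := by
        rw [← hfx2]
        nlinarith [hmZ, hr2Z, (by positivity : (0:ℤ) ≤ (b:ℤ))]
      refine ⟨ht1, ht2, ?_, ?_⟩
      · rw [← hfx1, ← hfx2]
        rw [bridge m q ((a:ℤ)+1) ((b:ℤ)+1) (r1:ℤ) (r2:ℤ) hmZ
          (by positivity) hr1Z (by positivity) hr2Z]
        have eif : (if (r1:ℤ) < (r2:ℤ) then (m:ℤ) else 0)
            = (if r1 < r2 then (m:ℤ) else 0) := by
          congr 1; simp only [eq_iff_iff]; omega
        rw [eif]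
        have : (m:ℤ) * ((a:ℤ) + 1 + ((b:ℤ) + 1)) = (m:ℤ) * ((a:ℤ) + (b:ℤ) + 2) := by ring
        rw [this]
        exact hcnd.1
      · rw [← hfx1, ← hfx2]
        rw [bridge m q ((b:ℤ)+1) ((a:ℤ)+1) (r2:ℤ) (r1:ℤ) hmZ
          (by positivity) hr2Z (by positivity) hr1Z]
        have eif : (if (r2:ℤ) < (r1:ℤ) then (m:ℤ) else 0)
            = (if r2 < r1 then (m:ℤ) else 0) := by
          congr 1; simp only [eq_iff_iff]; omega
        rw [eif]
        have : (m:ℤ) * ((b:ℤ) + 1 + ((a:ℤ) + 1)) = (m:ℤ) * ((a:ℤ) + (b:ℤ) + 2) := by ring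
        rw [this]
        exact hcnd.2
  -- injectivity
  have hinj : Set.InjOn f ↑D := by
    rintro ⟨⟨r1, r2⟩, ⟨a, b⟩⟩ hx ⟨⟨r1', r2'⟩, ⟨a', b'⟩⟩ hy hxy
    simp only [mem_coe, hD, Finset.mem_filter, mem_product, mem_range] at hx hy
    simp only [hf] at hxy
    simp only [Prod.mk.injEq] at hxy
    obtain ⟨h1, h2⟩ := hxy
    have hb1 : (r1:ℤ) < m := by exact_mod_cast hx.1.1.1
    have hb2 : (r2:ℤ) < m := by exact_mod_cast hx.1.1.2
    have hb1' : (r1':ℤ) < m := by exact_mod_cast hy.1.1.1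
    have hb2' : (r2':ℤ) < m := by exact_mod_cast hy.1.1.2
    have key : ∀ (x y u v : ℤ), 0 ≤ u → u < m → 0 ≤ v → v < m →
        (m:ℤ) * (x + 1) - u = (m:ℤ) * (y + 1) - v → x = y ∧ u = v := by
      intro x y u v hu1 hu2 hv1 hv2 he
      have hd : (m:ℤ) * (x - y) = u - v := by linarith [he]
      rcases lt_trichotomy x y with hc | hc | hc
      · exfalso
        have : x - y ≤ -1 := by omega
        have : (m:ℤ) * (x - y) ≤ (m:ℤ) * (-1) := mul_le_mul_of_nonneg_left this hmZ.le
        linarith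
      · constructor
        · exact hc
        · rw [hc] at hd; simp at hd; linarith
      · exfalso
        have : 1 ≤ x - y := by omega
        have : (m:ℤ) * 1 ≤ (m:ℤ) * (x - y) := mul_le_mul_of_nonneg_left this hmZ.le
        linarith
    have k1 := key (a:ℤ) (a':ℤ) (r1:ℤ) (r1':ℤ) (by positivity) hb1 (by positivity) hb1' h1
    have k2 := key (b:ℤ) (b':ℤ) (r2:ℤ) (r2':ℤ) (by positivity) hb2 (by positivity) hb2' h2
    have : a = a' := by exact_mod_cast k1.1
    have : r1 = r1' := by exact_mod_cast k1.2
    have : b = b' := by exact_mod_cast k2.1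
    have : r2 = r2' := by exact_mod_cast k2.2
    simp_all
  rw [hset, Set.ncard_coe_finset, Finset.card_image_of_injOn hinj]
  -- now count D
  have hcard2 : 2 * D.card = ∑ r1 ∈ range m, ∑ r2 ∈ range m, (Lb N r1 r2 * (Lb N r1 r2 + 1)) := by
    rw [hD, Finset.card_filter, Finset.sum_product]
    have estep : ∀ rr ∈ range m ×ˢ range m,
        (∑ ab ∈ range (q+1) ×ˢ range (q+1), if Cnd (rr, ab) then 1 else 0)
          = ∑ a ∈ range (q+1), ∑ b ∈ range (q+1),
              if a + b < Lb N rr.1 rr.2 then 1 else 0 := by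
      rintro ⟨r1, r2⟩ hrr
      simp only [mem_product, mem_range] at hrr
      rw [Finset.sum_product]
      refine Finset.sum_congr rfl (fun a _ => Finset.sum_congr rfl (fun b _ => ?_))
      congr 1
      simp only [eq_iff_iff]
      exact cell_iff m q N r1 r2 a b hm0 hN1 hrr.1 hrr.2 hN
    rw [Finset.sum_congr rfl estep, Finset.mul_sum, Finset.sum_product]
    refine Finset.sum_congr rfl (fun r1 hr1 => ?_)
    refine Finset.sum_congr rfl (fun r2 hr2 => ?_)
    simp only
    simp only [mem_range] at hr1 hr2
    refine cnt_pairs (q+1) (Lb N r1 r2) ?_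
    have hA : Lb N r1 r2 ≤ N * (m - 1) := by
      unfold Lb
      have h1 : N * r1 ≤ N * (m-1) := Nat.mul_le_mul_left N (by omega)
      have h2 : N * (min r1 r2) ≤ N * (m-1) := Nat.mul_le_mul_left N (by omega)
      split_ifs <;> omega
    have hB : N * (m - 1) + N = N * m := by
      have hm1 : m - 1 + 1 = m := by omega
      calc N * (m-1) + N = N * (m - 1 + 1) := by ring
      _ = N * m := by rw [hm1]
    have hC : N * m = q + 1 := by rw [Nat.mul_comm]; omega
    omega
  -- cast and evaluate
  have hcast : ((∑ r1 ∈ range m, ∑ r2 ∈ range m, (Lb N r1 r2 * (Lb N r1 r2 + 1)) : ℕ) : ℤ)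
      = ∑ r1 ∈ range m, ∑ r2 ∈ range m, termZ N r1 r2 := by
    push_cast
    refine Finset.sum_congr rfl (fun r1 _ => Finset.sum_congr rfl (fun r2 _ => ?_))
    have := cellcast N r1 r2 hN1
    push_cast at this
    exact this
  have hkey : 12 * (D.card : ℤ)
      = ((m:ℤ) - 1) * (((m:ℤ) - 1) * ((m:ℤ) * (N:ℤ) - 1)^2
          + ((N:ℤ) - 7) * ((m:ℤ) * (N:ℤ) - 1) + (N:ℤ) - (m:ℤ) + 6) := by
    have h2 : ((2 * D.card : ℕ) : ℤ)
        = ∑ r1 ∈ range m, ∑ r2 ∈ range m, termZ N r1 r2 := by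
      rw [hcard2]; exact hcast
    have h6 := ssum N m hN1 (by omega)
    push_cast at h2
    linarith [h6, h2]
  have hq' : (q : ℤ) = (m : ℤ) * (N : ℤ) - 1 := by
    have : ((q + 1 : ℕ) : ℤ) = ((m * N : ℕ) : ℤ) := by exact_mod_cast hN
    push_cast at this
    linarith
  rw [hq']
  linear_combination -hkey
end
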